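/- arXiv:2305.12682 — 4 statements merged into one kernel-verified Lean document; each statement's English description precedes it below -/
import Mathlib

section
/- Entanglement distillation strictly improves fidelity in the operating regime: for every real F with 1/2 < F < 1, one has D(F) > F. -/
/-- The Oxford distillation fidelity. -/
noncomputable def D (F : ℝ) : ℝ :=
  (F ^ 2 + ((1 - F) / 3) ^ 2) /
    (F ^ 2 + 2 * F * ((1 - F) / 3) + 5 * ((1 - F) / 3) ^ 2)

/-- Distillation strictly improves fidelity on the operating regime `1/2 < F < 1`. -/
theorem distillation_strictly_improves (F : ℝ) (h₁ : 1 / 2 < F) (h₂ : F < 1) :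
    D F > F := by
  have hden : 0 < F ^ 2 + 2 * F * ((1 - F) / 3) + 5 * ((1 - F) / 3) ^ 2 := by
    nlinarith [sq_nonneg F, sq_nonneg (1 - F)]
  rw [D, gt_iff_lt, lt_div_iff₀ hden]
  nlinarith [sq_nonneg (1 - F), sq_nonneg (2 * F - 1), mul_pos (sub_pos.2 h₂) (mul_pos (sub_pos.2 h₂) (sub_pos.2 h₂))]
end

section
/- The Oxford distillation map sends the interval [1/2, 1] into itself; more precisely, for every real F with 1/2 ≤ F ≤ 1 one has F ≤ D(F) ≤ 1 (in particular the distilled pair of two pairs with fidelity above 1/2 still has fidelity above 1/2). -/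
/-- The Oxford distillation map sends `[1/2, 1]` into itself; in fact
`F ≤ D F ≤ 1` for all `F` in that interval. -/
theorem distillation_maps_interval (F : ℝ) (h₁ : 1 / 2 ≤ F) (h₂ : F ≤ 1) :
    F ≤ D F ∧ D F ≤ 1 := by
  have hd : 0 < F ^ 2 + 2 * F * ((1 - F) / 3) + 5 * ((1 - F) / 3) ^ 2 := by
    nlinarith [sq_nonneg (1 - F), sq_nonneg F]
  constructor
  · rw [D, le_div_iff₀ hd]
    nlinarith [sq_nonneg (1 - F), sq_nonneg (2 * F - 1), mul_nonneg (mul_nonneg (sub_nonneg.2 h₂) (sub_nonneg.2 h₂)) (sub_nonneg.2 h₂)]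
  · rw [D, div_le_one hd]
    nlinarith [sq_nonneg (1 - F)]
end

section
/- The swap dynamics terminate: in any matching game there is no infinite sequence of matchings η₀, η₁, η₂, … such that each η_{i+1} is an approved swap matching of η_i. Equivalently, the approved-swap relation on the (finite) set of matchings is well-founded. -/
/-- The utility of switch `q` under matching `η`: the sum of `w q r` over all
requests `r` associated to `q`, i.e. with `η r = q`. -/
def switchUtility {R Q : Type*} [Fintype R] [DecidableEq Q]
    (w : Q → R → ℝ) (η : R → Q) (q : Q) : ℝ :=
  ∑ r ∈ Finset.univ.filter (fun r => η r = q), w q r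

/-- `η'` is an approved swap matching of `η`: two distinct requests matched to
distinct switches exchange their switches, each request strictly prefers its
new switch, and both involved switches strictly increase their utility. -/
def ApprovedSwap {R Q : Type*} [Fintype R] [DecidableEq R] [DecidableEq Q]
    (u : R → Q → ℝ) (w : Q → R → ℝ) (η η' : R → Q) : Prop :=
  ∃ r r' : R, r ≠ r' ∧ η r ≠ η r' ∧
    η' = Function.update (Function.update η r (η r')) r' (η r) ∧
    u r (η r') > u r (η r) ∧ u r' (η r) > u r' (η r') ∧
    switchUtility w η' (η r) > switchUtility w η (η r) ∧
    switchUtility w η' (η r') > switchUtility w η (η r')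

/-- Potential increases under an approved swap. -/
lemma potential_lt {R Q : Type*} [Fintype R] [Fintype Q]
    [DecidableEq R] [DecidableEq Q]
    (u : R → Q → ℝ) (w : Q → R → ℝ) {η η' : R → Q}
    (h : ApprovedSwap u w η η') :
    (∑ q, switchUtility w η q) < ∑ q, switchUtility w η' q := by
  obtain ⟨r, r', hrr, hqq, heq, _, _, h1, h2⟩ := h
  apply Finset.sum_lt_sum
  · intro p _
    rcases eq_or_ne p (η r) with rfl | hp1
    · exact le_of_lt h1
    rcases eq_or_ne p (η r') with rfl | hp2
    · exact le_of_lt h2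
    apply le_of_eq
    unfold switchUtility
    apply Finset.sum_congr _ (fun _ _ => rfl)
    apply Finset.filter_congr
    intro x _
    subst heq
    rcases eq_or_ne x r' with rfl | hx1
    · simp [Function.update, hp1.symm, hp2.symm]
    rcases eq_or_ne x r with rfl | hx2
    · simp [Function.update, hx1, hp1.symm, hp2.symm]
    · simp [Function.update, hx1, hx2]
  · exact ⟨η r, Finset.mem_univ _, h1⟩

/-- The swap dynamics terminate: the approved-swap relation (with the new
matching below the old one) is well-founded, i.e. there is no infinite
sequence of successive approved swaps. -/
theorem approved_swap_wellFounded
    {R Q : Type*} [Fintype R] [Fintype Q] [Nonempty R] [Nonempty Q]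
    [DecidableEq R] [DecidableEq Q]
    (u : R → Q → ℝ) (w : Q → R → ℝ) :
    WellFounded (fun η' η : R → Q => ApprovedSwap u w η η') := by
  have hwf : WellFounded (fun a b : R → Q =>
      (∑ q, switchUtility w b q) < ∑ q, switchUtility w a q) := by
    haveI : IsIrrefl (R → Q) (fun a b =>
        (∑ q, switchUtility w b q) < ∑ q, switchUtility w a q) :=
      ⟨fun _ => lt_irrefl _⟩
    haveI : IsTrans (R → Q) (fun a b =>
        (∑ q, switchUtility w b q) < ∑ q, switchUtility w a q) :=
      ⟨fun _ _ _ h1 h2 => lt_trans h2 h1⟩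
    apply Finite.wellFounded_of_trans_of_irrefl
  exact Subrelation.wf (fun h => potential_lt u w h) hwf
end

section
/- Upon convergence the RQSA dynamics reach a swap stable matching: for every matching game and every initial matching η₀, there exists a finite sequence of matchings η₀, η₁, …, η_n in which each η_{i+1} is an approved swap matching of η_i and the final matching η_n admits no approved swap, i.e. η_n is swap stable. In particular, every matching game possesses a swap stable matching. -/
/-- A matching is swap stable if it admits no approved swap. -/
def SwapStable {R Q : Type*} [Fintype R] [DecidableEq R] [DecidableEq Q]
    (u : R → Q → ℝ) (w : Q → R → ℝ) (η : R → Q) : Prop :=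
  ¬∃ η' : R → Q, ApprovedSwap u w η η'

section Aux

open Classical

variable {R Q : Type*} [Fintype R] [Fintype Q] [DecidableEq R] [DecidableEq Q]

/-- Total potential: sum of all switch utilities. -/
noncomputable def totalPot (w : Q → R → ℝ) (η : R → Q) : ℝ :=
  ∑ q, switchUtility w η q

lemma switchUtility_eq_of_ne (w : Q → R → ℝ) (η : R → Q) (r r' : R) (q : Q)
    (hqa : q ≠ η r) (hqb : q ≠ η r') :
    switchUtility w (Function.update (Function.update η r (η r')) r' (η r)) q
      = switchUtility w η q := by
  unfold switchUtility
  congr 1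
  ext s
  simp only [Finset.mem_filter, Finset.mem_univ, true_and]
  by_cases hs' : s = r'
  · subst hs'
    simp [Function.update_self, hqa.symm, hqb.symm]
  · by_cases hs : s = r
    · subst hs
      simp [Function.update_of_ne hs', Function.update_self, hqa.symm, hqb.symm]
    · simp [Function.update_of_ne hs', Function.update_of_ne hs]

lemma pot_lt_of_approved {u : R → Q → ℝ} {w : Q → R → ℝ} {η η' : R → Q}
    (h : ApprovedSwap u w η η') : totalPot w η < totalPot w η' := by
  obtain ⟨r, r', hrr, hq, heq, _, _, h3, h4⟩ := h
  subst heq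
  apply Finset.sum_lt_sum
  · intro q _
    by_cases hqa : q = η r
    · subst hqa; exact le_of_lt h3
    · by_cases hqb : q = η r'
      · subst hqb; exact le_of_lt h4
      · exact le_of_eq (switchUtility_eq_of_ne w η r r' q hqa hqb).symm
  · exact ⟨η r, Finset.mem_univ _, h3⟩

lemma rqsa_aux (u : R → Q → ℝ) (w : Q → R → ℝ) :
    ∀ (k : ℕ) (η : R → Q),
      (Finset.univ.filter (fun η' : R → Q => totalPot w η < totalPot w η')).card ≤ k →
      ∃ (n : ℕ) (seq : ℕ → (R → Q)), seq 0 = η ∧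
        (∀ i < n, ApprovedSwap u w (seq i) (seq (i + 1))) ∧
        SwapStable u w (seq n) := by
  intro k
  induction k with
  | zero =>
    intro η hcard
    by_cases hst : SwapStable u w η
    · exact ⟨0, fun _ => η, rfl, fun i hi => absurd hi (Nat.not_lt_zero i), hst⟩
    · exfalso
      rw [SwapStable, not_not] at hst
      obtain ⟨η', hsw⟩ := hst
      have : η' ∈ Finset.univ.filter
          (fun η'' : R → Q => totalPot w η < totalPot w η'') := by
        simp [pot_lt_of_approved hsw]
      have := Finset.card_pos.mpr ⟨η', this⟩
      omega
  | succ k ih =>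
    intro η hcard
    by_cases hst : SwapStable u w η
    · exact ⟨0, fun _ => η, rfl, fun i hi => absurd hi (Nat.not_lt_zero i), hst⟩
    · rw [SwapStable, not_not] at hst
      obtain ⟨η', hsw⟩ := hst
      have hlt := pot_lt_of_approved hsw
      have hsub : (Finset.univ.filter
            (fun η'' : R → Q => totalPot w η' < totalPot w η'')) ⊂
          (Finset.univ.filter (fun η'' : R → Q => totalPot w η < totalPot w η'')) := by
        constructor
        · intro x hx
          simp only [Finset.mem_filter, Finset.mem_univ, true_and] at hx ⊢
          exact lt_trans hlt hx
        · intro hcon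
          have : η' ∈ Finset.univ.filter
              (fun η'' : R → Q => totalPot w η < totalPot w η'') := by simp [hlt]
          have := hcon this
          simp at this
      have hcard' : (Finset.univ.filter
          (fun η'' : R → Q => totalPot w η' < totalPot w η'')).card ≤ k := by
        have := Finset.card_lt_card hsub
        omega
      obtain ⟨n, seq, hseq0, hseqA, hseqS⟩ := ih η' hcard'
      refine ⟨n + 1, fun i => match i with | 0 => η | j + 1 => seq j, rfl, ?_, hseqS⟩
      intro i hi
      match i with
      | 0 => simpa [hseq0] using hsw
      | j + 1 => exact hseqA j (by omega)

end Aux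

/-- From any initial matching, a finite sequence of approved swaps reaches a
swap stable matching; in particular every matching game has a swap stable
matching. -/
theorem rqsa_reaches_swap_stable
    {R Q : Type*} [Fintype R] [Fintype Q] [Nonempty R] [Nonempty Q]
    [DecidableEq R] [DecidableEq Q]
    (u : R → Q → ℝ) (w : Q → R → ℝ) (η₀ : R → Q) :
    ∃ (n : ℕ) (seq : ℕ → (R → Q)), seq 0 = η₀ ∧
      (∀ i < n, ApprovedSwap u w (seq i) (seq (i + 1))) ∧
      SwapStable u w (seq n) := by
  classical
  exact rqsa_aux u w _ η₀ le_rfl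
end
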